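/- arXiv:1902.08175 — 4 statements merged into one kernel-verified Lean document; each statement's English description precedes it below -/
import Mathlib

section
/- Pointwise derivative bound for the dynamic relay: Let y be a dynamic relay solution for (u, ξ). Then |y'(t)| ≤ |g(u(t))| for a.e. t ∈ (0,T). -/
/-!
Where `|y(t)| < 1`, the variational inequality tested with `z` on both sides of `y(t)` forces
`y'(t) = g(u(t))`. Where `|y(t)| = 1`, the constraint `|y| ≤ 1` makes `t` a local extremum of `y`;
since `y` is a primitive of `y'`, it is differentiable with derivative `y'(t)` at almost every
`t` (Lebesgue differentiation), and Fermat's theorem gives `y'(t) = 0` there.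
-/

open MeasureTheory Set Filter Topology

noncomputable def relayG (ρ₁ ρ₂ k u : ℝ) : ℝ :=
  k * max (u - ρ₂) 0 - k * max (ρ₁ - u) 0

def IsDynRelay (T ρ₁ ρ₂ k : ℝ) (u : ℝ → ℝ) (ξ : ℝ) (y y' : ℝ → ℝ) : Prop :=
  MemLp y' 2 (volume.restrict (Ioc (0:ℝ) T)) ∧
  y 0 = ξ ∧
  (∀ t ∈ Icc (0:ℝ) T, y t = ξ + ∫ s in (0:ℝ)..t, y' s) ∧
  (∀ t ∈ Icc (0:ℝ) T, |y t| ≤ 1) ∧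
  (∀ᵐ t ∂(volume.restrict (Ioo (0:ℝ) T)),
    ∀ z ∈ Icc (-1:ℝ) 1, (relayG ρ₁ ρ₂ k (u t) - y' t) * (z - y t) ≤ 0)

theorem ae_hasDerivAt_of_eq_add_integral {f y : ℝ → ℝ} {a b c : ℝ}
    (hf : IntegrableOn f (Ioc a b)) (hy : ∀ t ∈ Icc a b, y t = c + ∫ s in a..t, f s) :
    ∀ᵐ t ∂(volume.restrict (Ioo a b)), HasDerivAt y (f t) t := by
  rcases le_or_gt a b with hab | hba
  · have hderiv := ((intervalIntegrable_iff_integrableOn_Ioc_of_le hab).2 hf).ae_hasDerivAt_integral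
    rw [ae_restrict_iff' measurableSet_Ioo]
    filter_upwards [hderiv] with t ht htab
    have hprim := (ht (uIcc_of_le hab ▸ Ioo_subset_Icc_self htab) a left_mem_uIcc).const_add c
    refine hprim.congr_of_eventuallyEq ?_
    filter_upwards [Icc_mem_nhds htab.1 htab.2] with s hs using hy s hs
  · simp [Ioo_eq_empty_of_le hba.le]

theorem HasDerivAt.eq_zero_of_abs_le_of_abs_eq {f : ℝ → ℝ} {f' x M : ℝ} (hf : HasDerivAt f f' x)
    (hle : ∀ᶠ s in 𝓝 x, |f s| ≤ M) (heq : |f x| = M) : f' = 0 := by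
  rcases eq_or_eq_neg_of_abs_eq heq with hmax | hmin
  · refine IsLocalMax.hasDerivAt_eq_zero ?_ hf
    filter_upwards [hle] with s hs
    linarith [le_abs_self (f s)]
  · refine IsLocalMin.hasDerivAt_eq_zero ?_ hf
    filter_upwards [hle] with s hs
    linarith [neg_abs_le (f s)]

theorem eq_zero_of_forall_mul_sub_nonpos {q w a b : ℝ} (hw : w ∈ Ioo a b)
    (h : ∀ z ∈ Icc a b, q * (z - w) ≤ 0) : q = 0 := by
  have hab : a ≤ b := (hw.1.trans hw.2).le
  have hleft := h a ⟨le_rfl, hab⟩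
  have hright := h b ⟨hab, le_rfl⟩
  nlinarith [hw.1, hw.2]

theorem dyn_relay_derivative_bound_general (T ρ₁ ρ₂ k : ℝ)
    (u : ℝ → ℝ)
    (ξ : ℝ)
    (y y' : ℝ → ℝ) (hy : IsDynRelay T ρ₁ ρ₂ k u ξ y y') :
    ∀ᵐ t ∂(volume.restrict (Ioo (0:ℝ) T)), |y' t| ≤ |relayG ρ₁ ρ₂ k (u t)| := by
  obtain ⟨hy'L2, -, hrep, hbnd, hVI⟩ := hy
  have : IsFiniteMeasure (volume.restrict (Ioc (0:ℝ) T)) :=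
    isFiniteMeasure_restrict.2 measure_Ioc_lt_top.ne
  have hderiv := ae_hasDerivAt_of_eq_add_integral (hy'L2.integrable one_le_two) hrep
  filter_upwards [hderiv, hVI, ae_restrict_mem measurableSet_Ioo] with t ht hq htT
  rcases (hbnd t (Ioo_subset_Icc_self htT)).eq_or_lt with hbdry | hinner
  · have hnhds : ∀ᶠ s in 𝓝 t, |y s| ≤ 1 :=
      eventually_of_mem (Icc_mem_nhds htT.1 htT.2) hbnd
    rw [ht.eq_zero_of_abs_le_of_abs_eq hnhds hbdry, abs_zero]
    exact abs_nonneg _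
  · rw [sub_eq_zero.1 (eq_zero_of_forall_mul_sub_nonpos (abs_lt.1 hinner) hq)]

/-- Pointwise derivative bound for the dynamic relay: `|y'(t)| ≤ |g(u(t))|` a.e. -/
theorem dyn_relay_derivative_bound (T ρ₁ ρ₂ k : ℝ)
    (hT : 0 < T) (hρ : ρ₁ < ρ₂) (hk : 0 < k)
    (u : ℝ → ℝ) (hu : MemLp u 2 (volume.restrict (Ioc (0:ℝ) T)))
    (ξ : ℝ) (hξ : ξ ∈ Icc (-1:ℝ) 1)
    (y y' : ℝ → ℝ) (hy : IsDynRelay T ρ₁ ρ₂ k u ξ y y') :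
    ∀ᵐ t ∂(volume.restrict (Ioo (0:ℝ) T)), |y' t| ≤ |relayG ρ₁ ρ₂ k (u t)| :=
  dyn_relay_derivative_bound_general T ρ₁ ρ₂ k u ξ y y' hy
end

section
/- Local monotonicity of the dynamic relay (Corollary, eq. (2.17)): Let ξ ∈ [−1,1] and u, v ∈ L²(0,T) be such that u(t) = v(t) for a.e. t ∈ [0,t₁] and u(t) ≥ v(t) for a.e. t ∈ [t₁,t₂], where 0 ≤ t₁ ≤ t₂ ≤ T. If y_u and y_v are the dynamic relay solutions for (u, ξ) and (v, ξ) respectively, then (y_u(t) − y_v(t))·(u(t) − v(t)) ≥ 0 for a.e. t ∈ [t₁,t₂]. -/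
open MeasureTheory Set

/-! The difference `w = y_u - y_v` starts at `0`. Testing the variational inequality of `y_u`
with `y_v` and that of `y_v` with `y_u` and adding gives `(g(u) - g(v) - w') w ≥ 0`, while
`g(u) ≥ g(v)` on `[0, t₂]` because `g` is monotone. Hence `w' ≥ 0` a.e. where `w < 0`, which keeps
`w ≥ 0` on `[0, t₂]`; on `[t₁, t₂]` also `u - v ≥ 0`. -/

lemma exists_last_nonneg_of_continuousOn {f : ℝ → ℝ} {a b : ℝ} (hab : a ≤ b)
    (hf : ContinuousOn f (Icc a b)) (ha : 0 ≤ f a) (hb : f b < 0) :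
    ∃ c ∈ Ico a b, 0 ≤ f c ∧ ∀ s ∈ Ioc c b, f s < 0 := by
  set S := {s ∈ Icc a b | 0 ≤ f s}
  have hS : IsClosed S := hf.preimage_isClosed_of_isClosed isClosed_Icc isClosed_Ici
  have hbdd : BddAbove S := ⟨b, fun s hs => hs.1.2⟩
  have hcS : sSup S ∈ S := hS.csSup_mem ⟨a, ⟨left_mem_Icc.2 hab, ha⟩⟩ hbdd
  have hcb : sSup S ≠ b := fun h => (h ▸ hcS.2).not_gt hb
  refine ⟨sSup S, ⟨hcS.1.1, lt_of_le_of_ne hcS.1.2 hcb⟩, hcS.2, fun s hs => ?_⟩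
  by_contra! hfs
  exact (le_csSup hbdd ⟨⟨hcS.1.1.trans hs.1.le, hs.2⟩, hfs⟩).not_gt hs.1

/-- After the last point where `f` is nonnegative, `f` is negative and hence nondecreasing. -/
lemma nonneg_on_Icc_of_eq_add_integral {f f' : ℝ → ℝ} {a b f₀ : ℝ}
    (hf' : IntegrableOn f' (Icc a b)) (hf : ∀ t ∈ Icc a b, f t = f₀ + ∫ s in a..t, f' s)
    (h₀ : 0 ≤ f₀) (hneg : ∀ᵐ t ∂volume.restrict (Ioo a b), f t < 0 → 0 ≤ f' t) :
    ∀ t ∈ Icc a b, 0 ≤ f t := by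
  intro t ht
  by_contra! hft
  have hsub : Icc a t ⊆ Icc a b := Icc_subset_Icc_right ht.2
  have hint : ∀ x ∈ Icc a t, ∀ y ∈ Icc a t, IntervalIntegrable f' volume x y :=
    fun x hx y hy => (hf'.mono_set ((uIcc_subset_Icc hx hy).trans hsub)).intervalIntegrable
  have hcont : ContinuousOn f (Icc a t) := by
    have := intervalIntegral.continuousOn_primitive_interval (μ := volume)
      (hf'.mono_set (uIcc_of_le ht.1 ▸ hsub))
    rw [uIcc_of_le ht.1] at this
    exact (continuousOn_const.add this).congr fun s hs => hf s (hsub hs)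
  have hfa : f a = f₀ := by simpa using hf a (left_mem_Icc.2 (ht.1.trans ht.2))
  obtain ⟨c, hc, hfc, hlast⟩ :=
    exists_last_nonneg_of_continuousOn ht.1 hcont (hfa ▸ h₀) hft
  have hc' : c ∈ Icc a t := Ico_subset_Icc_self hc
  have hgrow : 0 ≤ ∫ s in c..t, f' s := by
    rw [intervalIntegral.integral_of_le hc.2.le, integral_Ioc_eq_integral_Ioo]
    refine setIntegral_nonneg_of_ae_restrict ?_
    filter_upwards [ae_restrict_mem measurableSet_Ioo,
      ae_restrict_of_ae_restrict_of_subset (Ioo_subset_Ioo hc.1 ht.2) hneg] with s hs hs'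
    exact hs' (hlast s (Ioo_subset_Ioc_self hs))
  have hsplit : f t = f c + ∫ s in c..t, f' s := by
    rw [hf t ht, hf c (hsub hc'), add_assoc, intervalIntegral.integral_add_adjacent_intervals
      (hint a (left_mem_Icc.2 ht.1) c hc') (hint c hc' t (right_mem_Icc.2 ht.1))]
  linarith

lemma relayG_monotone {ρ₁ ρ₂ k : ℝ} (hk : 0 ≤ k) : Monotone (relayG ρ₁ ρ₂ k) := by
  intro x y hxy
  have h₂ : max (x - ρ₂) 0 ≤ max (y - ρ₂) 0 := max_le_max (by linarith) le_rfl
  have h₁ : max (ρ₁ - y) 0 ≤ max (ρ₁ - x) 0 := max_le_max (by linarith) le_rfl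
  unfold relayG
  linarith [mul_le_mul_of_nonneg_left h₂ hk, mul_le_mul_of_nonneg_left h₁ hk]

namespace IsDynRelay

variable {T ρ₁ ρ₂ k ξ : ℝ} {u v y y' z z' : ℝ → ℝ}

lemma integrableOn_deriv (hy : IsDynRelay T ρ₁ ρ₂ k u ξ y y') : IntegrableOn y' (Icc 0 T) := by
  rw [integrableOn_Icc_iff_integrableOn_Ioc]
  exact hy.1.integrable one_le_two

lemma sub_eq_integral_sub (hy : IsDynRelay T ρ₁ ρ₂ k u ξ y y')
    (hz : IsDynRelay T ρ₁ ρ₂ k v ξ z z') {t : ℝ} (ht : t ∈ Icc 0 T) :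
    y t - z t = ∫ s in (0:ℝ)..t, (y' s - z' s) := by
  have hsub : uIcc 0 t ⊆ Icc 0 T := uIcc_of_le ht.1 ▸ Icc_subset_Icc_right ht.2
  rw [hy.2.2.1 t ht, hz.2.2.1 t ht, intervalIntegral.integral_sub
    (hy.integrableOn_deriv.mono_set hsub).intervalIntegrable
    (hz.integrableOn_deriv.mono_set hsub).intervalIntegrable]
  ring

lemma deriv_le_of_lt (hy : IsDynRelay T ρ₁ ρ₂ k u ξ y y')
    (hz : IsDynRelay T ρ₁ ρ₂ k v ξ z z') :
    ∀ᵐ t ∂volume.restrict (Ioo 0 T),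
      relayG ρ₁ ρ₂ k (v t) ≤ relayG ρ₁ ρ₂ k (u t) → y t < z t → z' t ≤ y' t := by
  filter_upwards [hy.2.2.2.2, hz.2.2.2.2, ae_restrict_mem measurableSet_Ioo]
    with t hyt hzt ht hg hlt
  have htT : t ∈ Icc 0 T := Ioo_subset_Icc_self ht
  have h₁ := hyt (z t) (abs_le.1 (hz.2.2.2.1 t htT))
  have h₂ := hzt (y t) (abs_le.1 (hy.2.2.2.1 t htT))
  nlinarith

end IsDynRelay

theorem dyn_relay_local_monotonicity_general (T ρ₁ ρ₂ k : ℝ)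
    (hk : 0 < k)
    (t₁ t₂ : ℝ) (ht₁ : 0 ≤ t₁) (ht₁₂ : t₁ ≤ t₂) (ht₂ : t₂ ≤ T)
    (u v : ℝ → ℝ)
    (heq : ∀ᵐ t ∂(volume.restrict (Icc (0:ℝ) t₁)), u t = v t)
    (hge : ∀ᵐ t ∂(volume.restrict (Icc t₁ t₂)), v t ≤ u t)
    (ξ : ℝ)
    (yu yu' yv yv' : ℝ → ℝ)
    (hyu : IsDynRelay T ρ₁ ρ₂ k u ξ yu yu')
    (hyv : IsDynRelay T ρ₁ ρ₂ k v ξ yv yv') :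
    ∀ᵐ t ∂(volume.restrict (Icc t₁ t₂)), 0 ≤ (yu t - yv t) * (u t - v t) := by
  have hg : ∀ᵐ t ∂volume.restrict (Ioo 0 t₂),
      relayG ρ₁ ρ₂ k (v t) ≤ relayG ρ₁ ρ₂ k (u t) := by
    refine ae_restrict_of_ae_restrict_of_subset Ioo_subset_Icc_self ?_
    rw [← Icc_union_Icc_eq_Icc ht₁ ht₁₂, ae_restrict_union_iff]
    exact ⟨heq.mono fun t h => h ▸ le_rfl, hge.mono fun t h => relayG_monotone hk.le h⟩
  have hsub : Icc 0 t₂ ⊆ Icc 0 T := Icc_subset_Icc_right ht₂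
  have hnonneg : ∀ t ∈ Icc 0 t₂, 0 ≤ yu t - yv t := by
    refine nonneg_on_Icc_of_eq_add_integral
      ((hyu.integrableOn_deriv.sub hyv.integrableOn_deriv).mono_set hsub)
      (fun t ht => by rw [zero_add]; exact hyu.sub_eq_integral_sub hyv (hsub ht)) le_rfl ?_
    filter_upwards [hg, ae_restrict_of_ae_restrict_of_subset (Ioo_subset_Ioo_right ht₂)
      (hyu.deriv_le_of_lt hyv)] with t hgt hdt hneg
    exact sub_nonneg.2 (hdt hgt (sub_neg.1 hneg))
  filter_upwards [ae_restrict_mem measurableSet_Icc, hge] with t ht hvu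
  exact mul_nonneg (hnonneg t ⟨ht₁.trans ht.1, ht.2⟩) (sub_nonneg.2 hvu)

/-- Local monotonicity of the dynamic relay (Corollary, eq. (2.17)). -/
theorem dyn_relay_local_monotonicity (T ρ₁ ρ₂ k : ℝ)
    (hT : 0 < T) (hρ : ρ₁ < ρ₂) (hk : 0 < k)
    (t₁ t₂ : ℝ) (ht₁ : 0 ≤ t₁) (ht₁₂ : t₁ ≤ t₂) (ht₂ : t₂ ≤ T)
    (u v : ℝ → ℝ)
    (hu : MemLp u 2 (volume.restrict (Ioc (0:ℝ) T)))
    (hv : MemLp v 2 (volume.restrict (Ioc (0:ℝ) T)))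
    (heq : ∀ᵐ t ∂(volume.restrict (Icc (0:ℝ) t₁)), u t = v t)
    (hge : ∀ᵐ t ∂(volume.restrict (Icc t₁ t₂)), v t ≤ u t)
    (ξ : ℝ) (hξ : ξ ∈ Icc (-1:ℝ) 1)
    (yu yu' yv yv' : ℝ → ℝ)
    (hyu : IsDynRelay T ρ₁ ρ₂ k u ξ yu yu')
    (hyv : IsDynRelay T ρ₁ ρ₂ k v ξ yv yv') :
    ∀ᵐ t ∂(volume.restrict (Icc t₁ t₂)), 0 ≤ (yu t - yv t) * (u t - v t) :=
  dyn_relay_local_monotonicity_general T ρ₁ ρ₂ k hk t₁ t₂ ht₁ ht₁₂ ht₂ u v heq hge ξ yu yu' yv yv'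
    hyu hyv
end

section
/- Explicit integral formula for the dynamic relay on intervals where the input stays below the lower threshold (eq. (2.15), second case): Let y be a dynamic relay solution for (u, ξ), and let [a,b] ⊆ [0,T] be such that u(s) ≤ ρ₁ for a.e. s ∈ [a,b]. Then for every t ∈ [a,b], y(t) = max{ −1, y(a) + ∫_a^t k·(u(s) − ρ₁) ds }. -/
open MeasureTheory Set

/-!
Where `u ≤ ρ₁` we have `g(u) = k (u - ρ₁) =: f ≤ 0`, and the relay is the projection onto
`[-1, 1]` of the flow `y' = f`: the variational inequality gives `f ≤ y'` wherever `y < 1` and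
`y' ≤ f` wherever `-1 < y`. Put `w = y a + ∫_a f`, a nonincreasing function. Both `w ≤ y` and
`y ≤ max (-1) w` follow by looking at the last point `c` where the inequality holds: beyond `c`
the constraint on the other side is inactive (`y < w ≤ y a ≤ 1`, resp. `-1 < y`), so integrating
the comparison of `y'` with `f` from `c` gives the inequality at the endpoint after all.
-/

theorem le_right_of_forall_last_crossing {P Q : ℝ → ℝ} {a b : ℝ} (hab : a ≤ b)
    (hP : ContinuousOn P (Icc a b)) (hQ : ContinuousOn Q (Icc a b)) (ha : P a ≤ Q a)
    (step : ∀ c ∈ Ico a b, P c ≤ Q c → (∀ s ∈ Ioo c b, Q s < P s) → P b ≤ Q b) :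
    P b ≤ Q b := by
  set S := {s ∈ Icc a b | P s ≤ Q s}
  have hS : IsCompact S := isCompact_Icc.of_isClosed_subset
    (isClosed_Icc.isClosed_le hP hQ) (sep_subset _ _)
  have hc : sSup S ∈ S := hS.sSup_mem ⟨a, ⟨left_mem_Icc.2 hab, ha⟩⟩
  rcases hc.1.2.eq_or_lt with hcb | hcb
  · exact hcb ▸ hc.2
  refine step _ ⟨hc.1.1, hcb⟩ hc.2 fun s hs ↦ lt_of_not_ge fun hPQ ↦ ?_
  exact hs.1.not_ge (le_csSup hS.bddAbove ⟨⟨hc.1.1.trans hs.1.le, hs.2.le⟩, hPQ⟩)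

theorem relayG_of_le {ρ₁ ρ₂ k u : ℝ} (hρ : ρ₁ ≤ ρ₂) (hu : u ≤ ρ₁) :
    relayG ρ₁ ρ₂ k u = k * (u - ρ₁) := by
  rw [relayG, max_eq_right (by linarith), max_eq_left (by linarith)]
  ring

section NormalConeOfIcc

variable {q x : ℝ} (h : ∀ z ∈ Icc (-1 : ℝ) 1, q * (z - x) ≤ 0)
include h

theorem nonpos_of_normal_Icc_of_lt_one (hx : x < 1) : q ≤ 0 := by
  nlinarith [h 1 ⟨by norm_num, le_rfl⟩]

theorem nonneg_of_normal_Icc_of_neg_one_lt (hx : -1 < x) : 0 ≤ q := by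
  nlinarith [h (-1) ⟨le_rfl, by norm_num⟩]

end NormalConeOfIcc

section ProjectedFlow

variable {y y' f : ℝ → ℝ} {a b : ℝ}

theorem eq_add_integral_of_eq_add_integral (hy' : IntegrableOn y' (Icc a b))
    (hy : ∀ s ∈ Icc a b, y s = y a + ∫ r in a..s, y' r) {c d : ℝ}
    (hc : c ∈ Icc a b) (hd : d ∈ Icc a b) : y d = y c + ∫ r in c..d, y' r := by
  have ha : a ∈ Icc a b := left_mem_Icc.2 (hc.1.trans hc.2)
  rw [hy d hd, hy c hc, add_assoc, ← intervalIntegral.integral_add_adjacent_intervals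
    ((hy'.mono_set (uIcc_subset_Icc ha hc)).intervalIntegrable)
    ((hy'.mono_set (uIcc_subset_Icc hc hd)).intervalIntegrable)]

theorem continuousOn_of_eq_add_integral (hy' : IntegrableOn y' (Icc a b))
    (hy : ∀ s ∈ Icc a b, y s = y a + ∫ r in a..s, y' r) : ContinuousOn y (Icc a b) := by
  refine ((continuousOn_const (c := y a)).add
    (intervalIntegral.continuousOn_primitive hy')).congr fun s hs ↦ ?_
  rw [hy s hs, intervalIntegral.integral_of_le hs.1]
  rfl

theorem integral_nonpos_of_ae_Ioo (hf_nonpos : ∀ᵐ s ∂volume.restrict (Ioo a b), f s ≤ 0)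
    {c d : ℝ} (hac : a ≤ c) (hcd : c ≤ d) (hdb : d ≤ b) : ∫ s in c..d, f s ≤ 0 := by
  have hf_nonpos' : ∀ᵐ s ∂volume.restrict (Icc c d), 0 ≤ -f s := by
    rw [← Measure.restrict_congr_set Ioo_ae_eq_Icc]
    filter_upwards [ae_restrict_of_ae_restrict_of_subset (Ioo_subset_Ioo hac hdb) hf_nonpos]
      with s hs using neg_nonneg.2 hs
  simpa [intervalIntegral.integral_neg] using
    intervalIntegral.integral_nonneg_of_ae_restrict hcd hf_nonpos'

theorem integral_le_integral_of_ae_Ioo {g h : ℝ → ℝ} (hab : a ≤ b)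
    (hg : IntegrableOn g (Icc a b)) (hh : IntegrableOn h (Icc a b))
    (hgh : ∀ᵐ s ∂volume.restrict (Ioo a b), g s ≤ h s) :
    ∫ s in a..b, g s ≤ ∫ s in a..b, h s := by
  refine intervalIntegral.integral_mono_ae_restrict hab
    ((intervalIntegrable_iff_integrableOn_Icc_of_le hab).2 hg)
    ((intervalIntegrable_iff_integrableOn_Icc_of_le hab).2 hh) ?_
  rwa [← Measure.restrict_congr_set Ioo_ae_eq_Icc]

variable (hab : a ≤ b) (hy' : IntegrableOn y' (Icc a b))
  (hy : ∀ s ∈ Icc a b, y s = y a + ∫ r in a..s, y' r) (hf : IntegrableOn f (Icc a b))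
  (hf_nonpos : ∀ᵐ s ∂volume.restrict (Ioo a b), f s ≤ 0)
  (hnormal : ∀ᵐ s ∂volume.restrict (Ioo a b),
    ∀ z ∈ Icc (-1 : ℝ) 1, (f s - y' s) * (z - y s) ≤ 0)
include hab hy' hy hf hf_nonpos hnormal

theorem add_integral_le_of_normal_Icc (hya : y a ≤ 1) : y a + ∫ s in a..b, f s ≤ y b := by
  set w := fun s ↦ y a + ∫ r in a..s, f r
  have hw : ∀ s ∈ Icc a b, w s = w a + ∫ r in a..s, f r := by simp [w]
  refine le_right_of_forall_last_crossing hab (continuousOn_of_eq_add_integral hf hw)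
    (continuousOn_of_eq_add_integral hy' hy) (by simp [w]) fun c hc _ hyw ↦ ?_
  have hcb : c ∈ Icc a b := Ico_subset_Icc_self hc
  have hfy' : ∀ᵐ s ∂volume.restrict (Ioo c b), f s ≤ y' s := by
    filter_upwards [ae_restrict_mem measurableSet_Ioo,
      ae_restrict_of_ae_restrict_of_subset (Ioo_subset_Ioo_left hc.1) hnormal] with s hs hns
    have hws : w s ≤ y a := add_le_of_nonpos_right
      (integral_nonpos_of_ae_Ioo hf_nonpos le_rfl (hc.1.trans hs.1.le) hs.2.le)
    exact sub_nonpos.1 (nonpos_of_normal_Icc_of_lt_one hns (by linarith [hyw s hs]))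
  have hint := integral_le_integral_of_ae_Ioo hc.2.le
    (hf.mono_set (Icc_subset_Icc_left hc.1)) (hy'.mono_set (Icc_subset_Icc_left hc.1)) hfy'
  have hbb : b ∈ Icc a b := right_mem_Icc.2 hab
  rw [eq_add_integral_of_eq_add_integral hf hw hcb hbb,
    eq_add_integral_of_eq_add_integral hy' hy hcb hbb]
  linarith

theorem le_max_add_integral_of_normal_Icc :
    y b ≤ max (-1) (y a + ∫ s in a..b, f s) := by
  set w := fun s ↦ y a + ∫ r in a..s, f r
  have hw : ∀ s ∈ Icc a b, w s = w a + ∫ r in a..s, f r := by simp [w]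
  refine le_right_of_forall_last_crossing (Q := fun s ↦ max (-1) (w s)) hab
    (continuousOn_of_eq_add_integral hy' hy)
    (continuousOn_const.sup (continuousOn_of_eq_add_integral hf hw))
    (by simp [w]) fun c hc hyc hwy ↦ ?_
  have hcb : c ∈ Icc a b := Ico_subset_Icc_self hc
  have hy'f : ∀ᵐ s ∂volume.restrict (Ioo c b), y' s ≤ f s := by
    filter_upwards [ae_restrict_mem measurableSet_Ioo,
      ae_restrict_of_ae_restrict_of_subset (Ioo_subset_Ioo_left hc.1) hnormal] with s hs hns
    exact sub_nonneg.1
      (nonneg_of_normal_Icc_of_neg_one_lt hns ((le_max_left _ _).trans_lt (hwy s hs)))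
  have hint := integral_le_integral_of_ae_Ioo hc.2.le
    (hy'.mono_set (Icc_subset_Icc_left hc.1)) (hf.mono_set (Icc_subset_Icc_left hc.1)) hy'f
  have hdecr := integral_nonpos_of_ae_Ioo hf_nonpos hc.1 hc.2.le le_rfl
  have hbb : b ∈ Icc a b := right_mem_Icc.2 hab
  calc y b = y c + ∫ r in c..b, y' r := eq_add_integral_of_eq_add_integral hy' hy hcb hbb
    _ ≤ max (-1) (w c) + ∫ r in c..b, f r := add_le_add hyc hint
    _ = max (-1 + ∫ r in c..b, f r) (w b) := by
      rw [eq_add_integral_of_eq_add_integral hf hw hcb hbb, max_add_add_right]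
    _ ≤ max (-1) (w b) := max_le_max_right _ (by linarith)

theorem eq_max_add_integral_of_normal_Icc (hya : y a ≤ 1) (hyb : -1 ≤ y b) :
    y b = max (-1) (y a + ∫ s in a..b, f s) :=
  (le_max_add_integral_of_normal_Icc hab hy' hy hf hf_nonpos hnormal).antisymm
    (max_le hyb (add_integral_le_of_normal_Icc hab hy' hy hf hf_nonpos hnormal hya))

end ProjectedFlow

theorem dyn_relay_formula_below_general (T ρ₁ ρ₂ k : ℝ)
    (hρ : ρ₁ < ρ₂) (hk : 0 < k)
    (u : ℝ → ℝ) (hu : MemLp u 2 (volume.restrict (Ioc (0:ℝ) T)))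
    (ξ : ℝ)
    (y y' : ℝ → ℝ) (hy : IsDynRelay T ρ₁ ρ₂ k u ξ y y')
    (a b : ℝ) (ha : 0 ≤ a) (hb : b ≤ T)
    (hub : ∀ᵐ s ∂(volume.restrict (Icc a b)), u s ≤ ρ₁) :
    ∀ t ∈ Icc a b, y t = max (-1) (y a + ∫ s in a..t, k * (u s - ρ₁)) := by
  obtain ⟨hy'L2, hy0, hrep, hbd, hVI⟩ := hy
  rintro t ⟨hat, htb⟩
  have hsub : Icc a t ⊆ Icc 0 T := Icc_subset_Icc ha (htb.trans hb)
  have hy'int : IntegrableOn y' (Icc 0 T) :=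
    (integrableOn_Icc_iff_integrableOn_Ioc).2 (hy'L2.integrable one_le_two)
  have huint : IntegrableOn u (Icc 0 T) :=
    (integrableOn_Icc_iff_integrableOn_Ioc).2 (hu.integrable one_le_two)
  have hub' : ∀ᵐ s ∂volume.restrict (Ioo a t), u s ≤ ρ₁ :=
    ae_restrict_of_ae_restrict_of_subset (Ioo_subset_Icc_self.trans (Icc_subset_Icc_right htb)) hub
  refine eq_max_add_integral_of_normal_Icc hat (hy'int.mono_set hsub)
    (fun s hs ↦ eq_add_integral_of_eq_add_integral hy'int (fun r hr ↦ hy0 ▸ hrep r hr)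
      (hsub (left_mem_Icc.2 hat)) (hsub hs))
    (((huint.mono_set hsub).sub (integrableOn_const measure_Icc_lt_top.ne)).const_mul k)
    (hub'.mono fun s hs ↦ mul_nonpos_of_nonneg_of_nonpos hk.le (sub_nonpos.2 hs)) ?_
    (abs_le.1 (hbd a (hsub (left_mem_Icc.2 hat)))).2
    (abs_le.1 (hbd t (hsub (right_mem_Icc.2 hat)))).1
  filter_upwards [hub', ae_restrict_of_ae_restrict_of_subset
    (Ioo_subset_Ioo ha (htb.trans hb)) hVI] with s hus hs
  rwa [relayG_of_le hρ.le hus] at hs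

/-- Explicit integral formula for the dynamic relay on intervals where the input stays
below the lower threshold (eq. (2.15), second case). -/
theorem dyn_relay_formula_below (T ρ₁ ρ₂ k : ℝ)
    (hT : 0 < T) (hρ : ρ₁ < ρ₂) (hk : 0 < k)
    (u : ℝ → ℝ) (hu : MemLp u 2 (volume.restrict (Ioc (0:ℝ) T)))
    (ξ : ℝ) (hξ : ξ ∈ Icc (-1:ℝ) 1)
    (y y' : ℝ → ℝ) (hy : IsDynRelay T ρ₁ ρ₂ k u ξ y y')
    (a b : ℝ) (ha : 0 ≤ a) (hab : a ≤ b) (hb : b ≤ T)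
    (hub : ∀ᵐ s ∂(volume.restrict (Icc a b)), u s ≤ ρ₁) :
    ∀ t ∈ Icc a b, y t = max (-1) (y a + ∫ s in a..t, k * (u s - ρ₁)) :=
  dyn_relay_formula_below_general T ρ₁ ρ₂ k hρ hk u hu ξ y y' hy a b ha hb hub
end

section
/- Constancy of the dynamic relay on intervals where the input stays between the thresholds (eq. (2.15), third case): Let y be a dynamic relay solution for (u, ξ), and let [a,b] ⊆ [0,T] be such that ρ₁ ≤ u(s) ≤ ρ₂ for a.e. s ∈ [a,b]. Then y(t) = y(a) for every t ∈ [a,b]. -/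
open MeasureTheory Set

namespace intervalIntegral

variable {f : ℝ → ℝ} {a b : ℝ}

theorem sq_integral_eq_two_mul_integral_mul_primitive (hf : IntervalIntegrable f volume a b) :
    (∫ x in a..b, f x) ^ 2 = 2 * ∫ x in a..b, f x * ∫ t in a..x, f t := by
  have hF := hf.absolutelyContinuousOnInterval_intervalIntegral (c := a) left_mem_uIcc
  have hderiv : ∀ᵐ x, x ∈ uIoc a b → deriv (fun x ↦ ∫ t in a..x, f t) x = f x := by
    filter_upwards [hf.ae_hasDerivAt_integral] with x hx hxab
    exact (hx (uIoc_subset_uIcc hxab) a left_mem_uIcc).deriv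
  have := hF.integral_deriv_mul_eq_sub hF
  rw [integral_congr_ae (g := fun x ↦ 2 * (f x * ∫ t in a..x, f t))
    (hderiv.mono fun x hx hxab ↦ by rw [hx hxab]; ring)] at this
  simpa [sq, integral_const_mul] using this.symm

theorem integral_eq_zero_of_ae_mul_primitive_nonpos (hab : a ≤ b)
    (hf : IntervalIntegrable f volume a b)
    (hsign : ∀ᵐ x ∂volume.restrict (Ioc a b), f x * ∫ t in a..x, f t ≤ 0) :
    ∫ x in a..b, f x = 0 := by
  have hsq : (∫ x in a..b, f x) ^ 2 ≤ 0 := by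
    rw [sq_integral_eq_two_mul_integral_mul_primitive hf, integral_of_le hab]
    have := integral_nonpos_of_ae hsign
    linarith
  exact pow_eq_zero_iff two_ne_zero |>.mp (le_antisymm hsq (sq_nonneg _))

end intervalIntegral

theorem relayG_eq_zero {ρ₁ ρ₂ k u : ℝ} (hu : u ∈ Icc ρ₁ ρ₂) : relayG ρ₁ ρ₂ k u = 0 := by
  simp [relayG, hu.1, hu.2]

namespace IsDynRelay

variable {T ρ₁ ρ₂ k ξ : ℝ} {u y y' : ℝ → ℝ}

theorem intervalIntegrable (hy : IsDynRelay T ρ₁ ρ₂ k u ξ y y') {s t : ℝ} (hs : 0 ≤ s)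
    (hst : s ≤ t) (ht : t ≤ T) : IntervalIntegrable y' volume s t := by
  rw [intervalIntegrable_iff_integrableOn_Ioc_of_le hst]
  exact IntegrableOn.mono_set (hy.1.integrable one_le_two) (Ioc_subset_Ioc hs ht)

theorem sub_eq_integral (hy : IsDynRelay T ρ₁ ρ₂ k u ξ y y') {s t : ℝ} (hs : 0 ≤ s)
    (hst : s ≤ t) (ht : t ≤ T) : y t - y s = ∫ x in s..t, y' x := by
  rw [hy.2.2.1 t ⟨hs.trans hst, ht⟩, hy.2.2.1 s ⟨hs, hst.trans ht⟩, add_sub_add_left_eq_sub,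
    intervalIntegral.integral_interval_sub_left (hy.intervalIntegrable le_rfl (hs.trans hst) ht)
      (hy.intervalIntegrable le_rfl hs (hst.trans ht))]

theorem mem_Icc (hy : IsDynRelay T ρ₁ ρ₂ k u ξ y y') {t : ℝ} (ht : t ∈ Icc 0 T) :
    y t ∈ Icc (-1) 1 :=
  abs_le.mp (hy.2.2.2.1 t ht)

theorem ae_deriv_mul_sub_nonpos (hy : IsDynRelay T ρ₁ ρ₂ k u ξ y y') {z : ℝ}
    (hz : z ∈ Icc (-1) 1) :
    ∀ᵐ s ∂volume.restrict (Ioc 0 T), u s ∈ Icc ρ₁ ρ₂ → y' s * (y s - z) ≤ 0 := by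
  rw [← Measure.restrict_congr_set Ioo_ae_eq_Ioc]
  filter_upwards [hy.2.2.2.2] with s hs hus
  have h := hs z hz
  rw [relayG_eq_zero hus] at h
  linarith

end IsDynRelay

theorem dyn_relay_constant_between_thresholds_general (T ρ₁ ρ₂ k : ℝ) (u : ℝ → ℝ) (ξ : ℝ)
    (y y' : ℝ → ℝ) (hy : IsDynRelay T ρ₁ ρ₂ k u ξ y y')
    (a b : ℝ) (ha : 0 ≤ a) (hb : b ≤ T)
    (hub : ∀ᵐ s ∂(volume.restrict (Icc a b)), ρ₁ ≤ u s ∧ u s ≤ ρ₂) :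
    ∀ t ∈ Icc a b, y t = y a := by
  intro t ⟨hat, htb⟩
  have htT : t ≤ T := htb.trans hb
  suffices ∫ x in a..t, y' x = 0 by rw [← sub_eq_zero, hy.sub_eq_integral ha hat htT, this]
  refine intervalIntegral.integral_eq_zero_of_ae_mul_primitive_nonpos hat
    (hy.intervalIntegrable ha hat htT) ?_
  have hsign := hy.ae_deriv_mul_sub_nonpos (hy.mem_Icc ⟨ha, hat.trans htT⟩)
  filter_upwards [ae_restrict_of_ae_restrict_of_subset (Ioc_subset_Ioc ha htT) hsign,
    ae_restrict_of_ae_restrict_of_subset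
      (Ioc_subset_Icc_self.trans (Icc_subset_Icc_right htb)) hub,
    ae_restrict_mem measurableSet_Ioc] with x hx hux hxat
  rw [← hy.sub_eq_integral ha hxat.1.le (hxat.2.trans htT)]
  exact hx hux

/-- Constancy of the dynamic relay on intervals where the input stays between
the thresholds (eq. (2.15), third case). -/
theorem dyn_relay_constant_between_thresholds (T ρ₁ ρ₂ k : ℝ)
    (hT : 0 < T) (hρ : ρ₁ < ρ₂) (hk : 0 < k)
    (u : ℝ → ℝ) (hu : MemLp u 2 (volume.restrict (Ioc (0:ℝ) T)))
    (ξ : ℝ) (hξ : ξ ∈ Icc (-1:ℝ) 1)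
    (y y' : ℝ → ℝ) (hy : IsDynRelay T ρ₁ ρ₂ k u ξ y y')
    (a b : ℝ) (ha : 0 ≤ a) (hab : a ≤ b) (hb : b ≤ T)
    (hub : ∀ᵐ s ∂(volume.restrict (Icc a b)), ρ₁ ≤ u s ∧ u s ≤ ρ₂) :
    ∀ t ∈ Icc a b, y t = y a :=
  dyn_relay_constant_between_thresholds_general T ρ₁ ρ₂ k u ξ y y' hy a b ha hb hub
end
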